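/- arXiv:1103.0519 — 2 statements merged into one kernel-verified Lean document; each statement's English description precedes it below -/
import Mathlib

section
/- Let A, B be nonnegative quadratic forms on a common domain with A(f,f) > 0 for all f ≠ 0 in the domain, and suppose Hilbert's projective distance h is uniformly bounded on a family 𝔉 of such forms that is closed under the operation (A,B) ↦ (1+δ)B − λA for λ = inf(B|A) and every δ > 0. Then h(A,B) = 0 for all A, B ∈ 𝔉; i.e., every two elements of 𝔉 are positive scalar multiples of each other on the diagonal. -/
/-!
Write `λ = inf(B|A)` and `μ = sup(B|A)` and suppose `0 < λ < μ < ∞`. The ratios of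
`C_δ = (1+δ)B − λA` to `A` are the images of those of `B` under `r ↦ (1+δ)r − λ`, so
`inf(C_δ|A) = δλ` while `sup(C_δ|A) = (1+δ)μ − λ ≥ μ − λ`. Hence `h(A, C_δ) → ∞` as
`δ → 0`, contradicting the uniform bound. In the remaining cases `h(A,B) = 0`, either
because `λ = μ` or through the junk values `sSup = 0` (unbounded) and `x / 0 = 0`.
-/

/-- The set of ratios `B(f)/A(f)` over nonzero `f` (equivalently `f` with `A(f) > 0`
for positive definite `A`). Here quadratic forms are recorded by their diagonals. -/
def ratioSet {W : Type*} [Zero W] (A B : W → ℝ) : Set ℝ :=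
  {r : ℝ | ∃ f : W, 0 < A f ∧ r = B f / A f}

/-- Hilbert's projective metric `h(A,B) = log(sup(B|A)/inf(B|A))`. -/
noncomputable def hilbertMetric {W : Type*} [Zero W] (A B : W → ℝ) : ℝ :=
  Real.log (sSup (ratioSet A B) / sInf (ratioSet A B))

section RatioSet

variable {W : Type*} [Zero W]

theorem ratioSet_affine (A B : W → ℝ) (a b : ℝ) :
    ratioSet A (fun f => a * B f - b * A f) = (fun r => a * r - b) '' ratioSet A B := by
  ext r
  constructor
  · rintro ⟨f, hf, rfl⟩
    exact ⟨B f / A f, ⟨f, hf, rfl⟩, by field_simp⟩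
  · rintro ⟨_, ⟨f, hf, rfl⟩, rfl⟩
    exact ⟨f, hf, by field_simp⟩

theorem monotone_affine {a : ℝ} (ha : 0 ≤ a) (b : ℝ) : Monotone fun r : ℝ => a * r - b :=
  fun _ _ h => sub_le_sub_right (mul_le_mul_of_nonneg_left h ha) b

theorem sSup_ratioSet_affine {A B : W → ℝ} {a : ℝ} (ha : 0 ≤ a) (b : ℝ)
    (hne : (ratioSet A B).Nonempty) (hbdd : BddAbove (ratioSet A B)) :
    sSup (ratioSet A (fun f => a * B f - b * A f)) = a * sSup (ratioSet A B) - b := by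
  rw [ratioSet_affine, ← (monotone_affine ha b).map_csSup_of_continuousAt
    (by fun_prop) hne hbdd]

theorem sInf_ratioSet_affine {A B : W → ℝ} {a : ℝ} (ha : 0 ≤ a) (b : ℝ)
    (hne : (ratioSet A B).Nonempty) (hbdd : BddBelow (ratioSet A B)) :
    sInf (ratioSet A (fun f => a * B f - b * A f)) = a * sInf (ratioSet A B) - b := by
  rw [ratioSet_affine, ← (monotone_affine ha b).map_csInf_of_continuousAt
    (by fun_prop) hne hbdd]

theorem ratioSet_nonneg {A B : W → ℝ} (hB : ∀ f, 0 ≤ B f) : ∀ r ∈ ratioSet A B, 0 ≤ r := by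
  rintro _ ⟨f, hf, rfl⟩
  exact div_nonneg (hB f) hf.le

theorem hilbertMetric_of_not_bddAbove {A B : W → ℝ} (h : ¬BddAbove (ratioSet A B)) :
    hilbertMetric A B = 0 := by
  rw [hilbertMetric, Real.sSup_of_not_bddAbove h, zero_div, Real.log_zero]

theorem hilbertMetric_of_sInf_eq_zero {A B : W → ℝ} (h : sInf (ratioSet A B) = 0) :
    hilbertMetric A B = 0 := by
  rw [hilbertMetric, h, div_zero, Real.log_zero]

theorem hilbertMetric_of_sSup_eq_sInf {A B : W → ℝ}
    (h : sSup (ratioSet A B) = sInf (ratioSet A B)) : hilbertMetric A B = 0 := by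
  rcases eq_or_ne (sInf (ratioSet A B)) 0 with h0 | h0
  · exact hilbertMetric_of_sInf_eq_zero h0
  · rw [hilbertMetric, h, div_self h0, Real.log_one]

end RatioSet

theorem exists_lt_log_affine_ratio {m M : ℝ} (hm : 0 < m) (hmM : m < M) (C : ℝ) :
    ∃ δ > 0, C < Real.log (((1 + δ) * M - m) / ((1 + δ) * m - m)) := by
  set δ := (M - m) / (2 * m * Real.exp C)
  have hδ : 0 < δ := div_pos (by linarith) (by positivity)
  refine ⟨δ, hδ, ?_⟩
  have hscale : Real.exp C * (δ * m) = (M - m) / 2 := by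
    simp only [δ]
    field_simp
  rw [show (1 + δ) * m - m = δ * m by ring,
    Real.lt_log_iff_exp_lt (div_pos (by nlinarith) (by positivity)), lt_div_iff₀ (by positivity)]
  nlinarith [Real.exp_pos C]

theorem stmt_5_general {W : Type*} [AddCommGroup W]
    (𝔉 : Set (W → ℝ))
    (hpos : ∀ A ∈ 𝔉, ∀ f : W, 0 ≤ A f ∧ (f ≠ 0 → 0 < A f))
    (hbd : ∃ C : ℝ, ∀ A ∈ 𝔉, ∀ B ∈ 𝔉, hilbertMetric A B ≤ C)
    (hclosed : ∀ A ∈ 𝔉, ∀ B ∈ 𝔉, ∀ δ : ℝ, 0 < δ →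
      (fun f => (1 + δ) * B f - sInf (ratioSet A B) * A f) ∈ 𝔉) :
    ∀ A ∈ 𝔉, ∀ B ∈ 𝔉, hilbertMetric A B = 0 := by
  obtain ⟨C, hC⟩ := hbd
  intro A hA B hB
  have hBnonneg : ∀ f, 0 ≤ B f := fun f => (hpos B hB f).1
  by_cases hbdd : BddAbove (ratioSet A B)
  case neg => exact hilbertMetric_of_not_bddAbove hbdd
  rcases (Real.sInf_nonneg (ratioSet_nonneg hBnonneg)).eq_or_lt with hinf0 | hinfpos
  · exact hilbertMetric_of_sInf_eq_zero hinf0.symm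
  have hne : (ratioSet A B).Nonempty :=
    Set.nonempty_iff_ne_empty.2 fun h => by simp [h] at hinfpos
  have hbddB : BddBelow (ratioSet A B) := ⟨0, ratioSet_nonneg hBnonneg⟩
  rcases (csInf_le_csSup hne hbddB hbdd).eq_or_lt with heq | hlt
  · exact hilbertMetric_of_sSup_eq_sInf heq.symm
  obtain ⟨δ, hδ, hCδ⟩ := exists_lt_log_affine_ratio hinfpos hlt C
  have hbound := hC A hA _ (hclosed A hA B hB δ hδ)
  rw [hilbertMetric, sSup_ratioSet_affine (by linarith) _ hne hbdd,
    sInf_ratioSet_affine (by linarith) _ hne hbddB] at hbound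
  exact (hCδ.not_ge hbound).elim

/-- Let `𝔉` be a family of nonnegative quadratic forms, positive on
nonzero vectors, on which Hilbert's projective distance is uniformly bounded, and
which is closed under `(A,B) ↦ (1+δ)B − inf(B|A)·A` for every `δ > 0`.  Then
`h(A,B) = 0` for all `A, B ∈ 𝔉`. -/
theorem stmt_5 {W : Type*} [AddCommGroup W] [Module ℝ W] [Nontrivial W]
    (𝔉 : Set (W → ℝ))
    (hpos : ∀ A ∈ 𝔉, ∀ f : W, 0 ≤ A f ∧ (f ≠ 0 → 0 < A f))
    (hbd : ∃ C : ℝ, ∀ A ∈ 𝔉, ∀ B ∈ 𝔉, hilbertMetric A B ≤ C)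
    (hclosed : ∀ A ∈ 𝔉, ∀ B ∈ 𝔉, ∀ δ : ℝ, 0 < δ →
      (fun f => (1 + δ) * B f - sInf (ratioSet A B) * A f) ∈ 𝔉) :
    ∀ A ∈ 𝔉, ∀ B ∈ 𝔉, hilbertMetric A B = 0 :=
  stmt_5_general 𝔉 hpos hbd hclosed
end

section
/- Let E and F be measurable spaces with E₁ a standard Borel (separable metric) space. Given random variables X : Ω → E₁ and Z : Ω → E₂ on a probability space, there exists a jointly measurable F : E₂ × [0,1] → E₁ such that if U is uniform on [0,1] and independent of Z, then (F(Z,U), Z) has the same law as (X, Z). -/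
/-!
Let `κ` be the conditional distribution of `X` given `Z`. Since `E₁` is standard Borel, `κ` is
the image of the uniform law on `[0, 1]` under a jointly measurable map `F`, i.e.
`κ z = Law (F (z, U))`. If `U` is uniform and independent of `Z' ~ Z`, then `(Z', U)` has law
`Law Z ⊗ Unif[0, 1]`, so `(Z', F (Z', U))` has law `Law Z ⊗ κ`, which is the law of `(Z, X)`
by disintegration.
-/

open MeasureTheory ProbabilityTheory Set

lemma unitInterval.map_projIcc_volume_restrict :
    (volume.restrict (Icc (0 : ℝ) 1)).map (projIcc 0 1 zero_le_one) =
      (volume : Measure unitInterval) := by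
  rw [← unitInterval.measurePreserving_coe.map_eq, Measure.map_map (by fun_prop) (by fun_prop)]
  have : projIcc (0 : ℝ) 1 zero_le_one ∘ Subtype.val = id := funext (projIcc_val zero_le_one)
  rw [this, Measure.map_id]

theorem ProbabilityTheory.Kernel.exists_measurable_map_uniform_Icc_eq {α β : Type*}
    [MeasurableSpace α] [MeasurableSpace β] [StandardBorelSpace β] [Nonempty β]
    (κ : Kernel α β) [IsMarkovKernel κ] :
    ∃ F : α × ℝ → β, Measurable F ∧
      ∀ a, (volume.restrict (Icc (0 : ℝ) 1)).map (fun u ↦ F (a, u)) = κ a := by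
  obtain ⟨f, hf, hfκ⟩ := κ.exists_measurable_map_eq_unitInterval
  refine ⟨fun p ↦ f p.1 (projIcc 0 1 zero_le_one p.2), by fun_prop, fun a ↦ ?_⟩
  rw [← hfκ, ← unitInterval.map_projIcc_volume_restrict,
    Measure.map_map (by fun_prop) (by fun_prop)]
  rfl

theorem MeasureTheory.Measure.map_prodMk_eq_compProd {α β γ : Type*}
    [MeasurableSpace α] [MeasurableSpace β] [MeasurableSpace γ]
    (μ : Measure α) [SFinite μ] (ν : Measure β) [SFinite ν] (κ : Kernel α γ) [IsSFiniteKernel κ]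
    {F : α × β → γ} (hF : Measurable F) (hFκ : ∀ a, ν.map (fun b ↦ F (a, b)) = κ a) :
    (μ.prod ν).map (fun p ↦ (p.1, F p)) = μ ⊗ₘ κ := by
  ext s hs
  have hmk : Measurable fun p : α × β ↦ (p.1, F p) := by fun_prop
  rw [Measure.map_apply hmk hs, Measure.prod_apply (hmk hs), Measure.compProd_apply hs]
  refine lintegral_congr fun a ↦ ?_
  rw [← hFκ, Measure.map_apply (by fun_prop) (measurable_prodMk_left hs)]
  rfl

/-- Given random variables `X : Ω → E₁` (with `E₁` standard Borel) and
`Z : Ω → E₂` on a probability space, there is a jointly measurable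
`F : E₂ × [0,1] → E₁` such that whenever `U` is uniform on `[0,1]` and independent of
a copy `Z'` of `Z`, the pair `(F(Z',U), Z')` has the same law as `(X, Z)`. -/
theorem stmt_13 {Ω E₁ E₂ : Type*} [MeasureSpace Ω]
    [IsProbabilityMeasure (ℙ : Measure Ω)]
    [MeasurableSpace E₁] [StandardBorelSpace E₁] [Nonempty E₁]
    [MeasurableSpace E₂]
    (X : Ω → E₁) (Z : Ω → E₂) (hX : Measurable X) (hZ : Measurable Z) :
    ∃ F : E₂ × ℝ → E₁, Measurable F ∧
      ∀ (Ω' : Type) (_ : MeasureSpace Ω'),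
        IsProbabilityMeasure (ℙ : Measure Ω') →
        ∀ (Z' : Ω' → E₂) (U : Ω' → ℝ), Measurable Z' → Measurable U →
          Measure.map Z' (ℙ : Measure Ω') = Measure.map Z (ℙ : Measure Ω) →
          Measure.map U (ℙ : Measure Ω') = volume.restrict (Set.Icc (0 : ℝ) 1) →
          IndepFun U Z' (ℙ : Measure Ω') →
          Measure.map (fun ω => (F (Z' ω, U ω), Z' ω)) (ℙ : Measure Ω')
            = Measure.map (fun ω => (X ω, Z ω)) (ℙ : Measure Ω) := by
  obtain ⟨F, hF, hFκ⟩ := (condDistrib X Z ℙ).exists_measurable_map_uniform_Icc_eq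
  refine ⟨F, hF, fun Ω' _ _ Z' U hZ' hU hZ'Z hUunif hUZ' ↦ ?_⟩
  have hlaw_ZU : (ℙ : Measure Ω').map (fun ω ↦ (Z' ω, U ω)) =
      ((ℙ : Measure Ω).map Z).prod (volume.restrict (Icc (0 : ℝ) 1)) := by
    rw [(indepFun_iff_map_prod_eq_prod_map_map hZ'.aemeasurable hU.aemeasurable).1 hUZ'.symm,
      hZ'Z, hUunif]
  have hlaw_ZF : (ℙ : Measure Ω').map (fun ω ↦ (Z' ω, F (Z' ω, U ω))) =
      (ℙ : Measure Ω).map (fun ω ↦ (Z ω, X ω)) := by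
    rw [← compProd_map_condDistrib hX.aemeasurable,
      ← Measure.map_prodMk_eq_compProd _ _ _ hF hFκ, ← hlaw_ZU,
      Measure.map_map (by fun_prop) (by fun_prop)]
    rfl
  have hswap := congrArg (Measure.map Prod.swap) hlaw_ZF
  rwa [Measure.map_map measurable_swap (by fun_prop),
    Measure.map_map measurable_swap (by fun_prop)] at hswap
end
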